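/- arXiv:1908.06482 — 2 statements merged into one kernel-verified Lean document; each statement's English description precedes it below -/
import Mathlib

section
/- There exists a ground set V, a set function f : 2^V → ℝ, sets A ⊂ A' ⊆ V and an element Y ∉ A' such that f(A ∪ {Y}) − f(A) < f(A' ∪ {Y}) − f(A'); in particular, the specific function arising from the three-node MRF counterexample (with priors φ(X)=[0.5,0.5], φ(Y)=[0.8,0.2], φ(Z)=[0.1,0.9] and homophily potential ψ(a,b)=0.99 if a=b, 0.01 otherwise, where f(S) is the negated symmetric KL-divergence between the BP marginal of X on the full star graph and on the subgraph induced by S ∪ {X}) is not submodular. -/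
open Finset

/-- Symmetric KL-divergence, written as ∑ (p x − q x)·log(p x / q x). -/
noncomputable def symKL (p q : Fin 2 → ℝ) : ℝ :=
  ∑ x, (p x - q x) * Real.log (p x / q x)

/-- Priors of the two leaves: leaf 0 is Y with prior [0.8, 0.2],
leaf 1 is Z with prior [0.1, 0.9]. -/
noncomputable def leafPrior : Fin 2 → Fin 2 → ℝ := ![![0.8, 0.2], ![0.1, 0.9]]

/-- Homophily potential. -/
noncomputable def pot (a b : Fin 2) : ℝ := if a = b then 0.99 else 0.01

/-- Message from leaf `i` to the center `X`. -/
noncomputable def msg (i : Fin 2) (x : Fin 2) : ℝ := ∑ w, pot w x * leafPrior i w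

/-- Prior of the center `X`: [0.5, 0.5]. -/
noncomputable def priorX : Fin 2 → ℝ := ![0.5, 0.5]

/-- Exact BP marginal of the center `X` of the star MRF restricted to the
subgraph induced by the leaf set `S` together with `X`. -/
noncomputable def marg (S : Finset (Fin 2)) (x : Fin 2) : ℝ :=
  (priorX x * ∏ i ∈ S, msg i x) / (∑ y, priorX y * ∏ i ∈ S, msg i y)

/-- Negated symmetric KL-divergence objective. -/
noncomputable def objf (S : Finset (Fin 2)) : ℝ :=
  -symKL (marg Finset.univ) (marg S)

lemma mE0 : marg ∅ 0 = 1/2 := by simp [marg, priorX, Fin.sum_univ_two]; norm_num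
lemma mE1 : marg ∅ 1 = 1/2 := by simp [marg, priorX, Fin.sum_univ_two]; norm_num
lemma mY0 : marg {0} 0 = 397/500 := by
  simp [marg, priorX, msg, pot, leafPrior, Fin.sum_univ_two]; norm_num
lemma mY1 : marg {0} 1 = 103/500 := by
  simp [marg, priorX, msg, pot, leafPrior, Fin.sum_univ_two]; norm_num
lemma mZ0 : marg {1} 0 = 27/250 := by
  simp [marg, priorX, msg, pot, leafPrior, Fin.sum_univ_two]; norm_num
lemma mZ1 : marg {1} 1 = 223/250 := by
  simp [marg, priorX, msg, pot, leafPrior, Fin.sum_univ_two]; norm_num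
lemma mU0 : marg Finset.univ 0 = 10719/33688 := by
  simp [marg, priorX, msg, pot, leafPrior, Fin.sum_univ_two, Fin.prod_univ_two]; norm_num
lemma mU1 : marg Finset.univ 1 = 22969/33688 := by
  simp [marg, priorX, msg, pot, leafPrior, Fin.sum_univ_two, Fin.prod_univ_two]; norm_num


/-- The objective of the three-node MRF counterexample is not submodular:
there are `A ⊂ A' ⊆ V` and `Y ∉ A'` whose marginal gain at the smaller set is
strictly smaller than at the larger set. -/
theorem objf_not_submodular :
    ∃ A A' : Finset (Fin 2), A ⊂ A' ∧ A' ⊆ Finset.univ ∧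
      ∃ Y : Fin 2, Y ∉ A' ∧
        objf (insert Y A) - objf A < objf (insert Y A') - objf A' := by
  refine ⟨∅, {1}, by decide, by decide, 0, by decide, ?_⟩
  have h1 : insert (0:Fin 2) (∅ : Finset (Fin 2)) = {0} := rfl
  have h2 : insert (0:Fin 2) ({1} : Finset (Fin 2)) = Finset.univ := by decide
  rw [h1, h2]
  simp only [objf, symKL, Fin.sum_univ_two, mE0, mE1, mY0, mY1, mZ0, mZ1, mU0, mU1]
  have b : ∀ x : ℝ, 0 < x → Real.log x ≤ x - 1 := fun x hx => Real.log_le_sub_one_of_pos hx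
  have c : ∀ x : ℝ, 0 < x → 1 - x⁻¹ ≤ Real.log x := by
    intro x hx
    have h := Real.log_le_sub_one_of_pos (inv_pos.mpr hx)
    rw [Real.log_inv] at h; linarith
  have h1 := c (27875/8422 : ℝ) (by norm_num)
  have h2 := b (3375/8422 : ℝ) (by norm_num)
  have h3 := b (22969/16844 : ℝ) (by norm_num)
  have h4 := c (10719/16844 : ℝ) (by norm_num)
  have h5 := b (12875/16844 : ℝ) (by norm_num)
  have h6 := c (49625/16844 : ℝ) (by norm_num)
  norm_num at h1 h2 h3 h4 h5 h6
  linarith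
end

section
/- There exists a set function f : 2^V → ℝ and sets A ⊆ A' with f(A) > f(A'); in particular, the negated symmetric-KL objective from the three-node MRF counterexample (priors φ(X)=[0.5,0.5], φ(Y)=[0.8,0.2], φ(Z)=[0.1,0.9], homophily potential 0.99/0.01) is not monotonically increasing: adding the variable Y to the subgraph {X} strictly increases the symmetric KL-divergence between the marginal of X on the subgraph and on the full graph. -/
open Finset

/-!
For two-point distributions of equal mass, `symKL p q = (p₀ - q₀) (logit p₀ - logit q₀)`.
Leaf `Z` drags the full-graph marginal `b` of `X` below `1/2`, while leaf `Y` alone pushes the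
marginal of `X` above `1/2`. Hence `b` is farther from the marginal on `{X, Y}` than from the
uniform marginal on `{X}`; only the signs of the log-odds matter, no numerical bounds on `log`.
-/

open Real

lemma symKL_eq_mul_sub_log_odds {p q : Fin 2 → ℝ} (hp : ∀ x, 0 < p x) (hq : ∀ x, 0 < q x)
    (hpq : p 0 + p 1 = q 0 + q 1) :
    symKL p q = (p 0 - q 0) * (log (p 0 / p 1) - log (q 0 / q 1)) := by
  simp only [symKL, Fin.sum_univ_two]
  rw [log_div (hp 0).ne' (hq 0).ne', log_div (hp 1).ne' (hq 1).ne',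
    log_div (hp 0).ne' (hp 1).ne', log_div (hq 0).ne' (hq 1).ne']
  linear_combination (log (p 1) - log (q 1)) * hpq

lemma symKL_uniform_lt_symKL {p q : Fin 2 → ℝ} (hp : ∀ x, 0 < p x) (hq : ∀ x, 0 < q x)
    (hp_sum : p 0 + p 1 = 1) (hq_sum : q 0 + q 1 = 1) (hp0 : p 0 < 1 / 2) (hq0 : 1 / 2 < q 0) :
    symKL p (fun _ => 1 / 2) < symKL p q := by
  rw [symKL_eq_mul_sub_log_odds hp (fun _ => by norm_num) (by linarith),
    symKL_eq_mul_sub_log_odds hp hq (by linarith), div_self (by norm_num), log_one]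
  have hp_odds : log (p 0 / p 1) < 0 :=
    log_neg (div_pos (hp 0) (hp 1)) ((div_lt_one (hp 1)).2 (by linarith))
  have hq_odds : 0 < log (q 0 / q 1) :=
    log_pos ((one_lt_div (hq 1)).2 (by linarith))
  nlinarith [mul_pos (sub_pos.2 hq0) (neg_pos.2 hp_odds),
    mul_pos (sub_pos.2 (hp0.trans hq0)) hq_odds]

lemma priorX_pos (x : Fin 2) : 0 < priorX x := by
  fin_cases x <;> norm_num [priorX]

lemma msg_pos (i x : Fin 2) : 0 < msg i x := by
  fin_cases i <;> fin_cases x <;> norm_num [msg, pot, leafPrior, Fin.sum_univ_two]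

lemma marg_num_pos (S : Finset (Fin 2)) (x : Fin 2) : 0 < priorX x * ∏ i ∈ S, msg i x :=
  mul_pos (priorX_pos x) (prod_pos fun i _ => msg_pos i x)

lemma marg_pos (S : Finset (Fin 2)) (x : Fin 2) : 0 < marg S x :=
  div_pos (marg_num_pos S x) (sum_pos (fun y _ => marg_num_pos S y) univ_nonempty)

lemma marg_zero_add_marg_one (S : Finset (Fin 2)) : marg S 0 + marg S 1 = 1 := by
  rw [marg, marg, ← add_div, ← Fin.sum_univ_two (fun y => priorX y * ∏ i ∈ S, msg i y)]
  exact div_self (sum_pos (fun y _ => marg_num_pos S y) univ_nonempty).ne'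

lemma marg_empty : marg ∅ = fun _ => 1 / 2 := by
  ext x
  fin_cases x <;> norm_num [marg, priorX, Fin.sum_univ_two]

lemma marg_univ_zero : marg univ 0 = 10719 / 33688 := by
  norm_num [marg, msg, priorX, pot, leafPrior, Fin.sum_univ_two, Fin.prod_univ_two]

lemma marg_singleton_zero : marg {0} 0 = 397 / 500 := by
  norm_num [marg, msg, priorX, pot, leafPrior, Fin.sum_univ_two]

/-- The objective is not monotonically increasing: adding leaf `Y` (leaf 0) to
the subgraph `{X}` (leaf set ∅) strictly decreases the objective, i.e. strictly
increases the symmetric KL-divergence to the full-graph marginal of `X`.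
In particular there are `A ⊆ A'` with `f(A) > f(A')`. -/
theorem objf_not_monotone :
    objf ∅ > objf {(0 : Fin 2)} ∧
    ∃ A A' : Finset (Fin 2), A ⊆ A' ∧ objf A > objf A' := by
  have h_drop : objf ∅ > objf {(0 : Fin 2)} := by
    rw [gt_iff_lt, objf, objf, neg_lt_neg_iff, marg_empty]
    exact symKL_uniform_lt_symKL (marg_pos univ) (marg_pos {0}) (marg_zero_add_marg_one univ)
      (marg_zero_add_marg_one {0}) (by rw [marg_univ_zero]; norm_num)
      (by rw [marg_singleton_zero]; norm_num)
  exact ⟨h_drop, ∅, {0}, empty_subset _, h_drop⟩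
end
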